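/- arXiv:1603.01720 — 3 statements merged into one kernel-verified Lean document; each statement's English description precedes it below -/
import Mathlib

section
/- Let a, b be real numbers with -1 < a ≤ 0, |b| < 1 and |b| < 1 + a. Then there exists a constant C > 0, depending only on a and b, such that for all s, t ≥ 0: t^{1+a+b} + s^{1+a+b} - 2·R_{a,b}(t,s) ≤ C · |t-s|^{1+a+b}. -/
open Real MeasureTheory

/-!
For `0 ≤ s ≤ t` the scaled Beta integral `∫₀ᶜ u^a (c-u)^b du = c^(1+a+b) Β(a+1,b+1)`, applied
with `c = s` and `c = t`, turns the left-hand side into `Β(a+1,b+1)⁻¹ ∫ₛᵗ u^a (t-u)^b du`.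
Since `a ≤ 0`, `u^a ≤ (u-s)^a` on `(s,t)`, and `∫ₛᵗ (u-s)^a (t-u)^b du` is again a scaled Beta
integral, equal to `(t-s)^(1+a+b) Β(a+1,b+1)`. Hence the bound holds with `C = 1`.
-/

/-- The Euler Beta function. -/
noncomputable def Beta (x y : ℝ) : ℝ := Real.Gamma x * Real.Gamma y / Real.Gamma (x + y)

/-- The covariance function `R_{a,b}(t,s)` of the weighted fractional Brownian motion. -/
noncomputable def R (a b t s : ℝ) : ℝ :=
  (1 / (2 * Beta (a + 1) (b + 1))) *
    ∫ u in (0:ℝ)..(min t s), u ^ a * ((t - u) ^ b + (s - u) ^ b)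

lemma Beta_pos {x y : ℝ} (hx : 0 < x) (hy : 0 < y) : 0 < Beta x y := by
  unfold Beta
  have := Real.Gamma_pos_of_pos hx
  have := Real.Gamma_pos_of_pos hy
  have := Real.Gamma_pos_of_pos (add_pos hx hy)
  positivity

lemma ofReal_Beta {x y : ℝ} (hx : 0 < x) (hy : 0 < y) :
    (Beta x y : ℂ) = Complex.betaIntegral x y := by
  rw [Complex.betaIntegral_eq_Gamma_mul_div _ _ (by simpa) (by simpa), Beta]
  simp only [Complex.ofReal_div, Complex.ofReal_mul, ← Complex.Gamma_ofReal, Complex.ofReal_add]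

lemma integral_rpow_mul_sub_rpow_of_pos {a b c : ℝ} (ha : -1 < a) (hb : -1 < b) (hc : 0 < c) :
    ∫ u in (0:ℝ)..c, u ^ a * (c - u) ^ b = c ^ (1 + a + b) * Beta (a + 1) (b + 1) := by
  apply Complex.ofReal_injective
  rw [← intervalIntegral.integral_ofReal, Complex.ofReal_mul, Complex.ofReal_cpow hc.le,
    ofReal_Beta (by linarith) (by linarith),
    show ((1 + a + b : ℝ) : ℂ) = ↑(a + 1) + ↑(b + 1) - 1 by push_cast; ring,
    ← Complex.betaIntegral_scaled _ _ hc]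
  refine intervalIntegral.integral_congr fun u hu => ?_
  rw [Set.uIcc_of_le hc.le] at hu
  push_cast [Complex.ofReal_cpow hu.1, Complex.ofReal_cpow (sub_nonneg.2 hu.2)]
  ring_nf

section

variable {a b s t : ℝ}

lemma integral_sub_rpow_mul_sub_rpow_of_lt (ha : -1 < a) (hb : -1 < b) (hst : s < t) :
    ∫ u in s..t, (u - s) ^ a * (t - u) ^ b = (t - s) ^ (1 + a + b) * Beta (a + 1) (b + 1) := by
  rw [← integral_rpow_mul_sub_rpow_of_pos ha hb (sub_pos.2 hst), ← sub_self s,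
    ← intervalIntegral.integral_comp_sub_right (fun w => w ^ a * (t - s - w) ^ b)]
  simp only [sub_sub_sub_cancel_right]

lemma integral_sub_rpow_mul_sub_rpow (ha : -1 < a) (hb : -1 < b) (hp : 0 < 1 + a + b)
    (hst : s ≤ t) :
    ∫ u in s..t, (u - s) ^ a * (t - u) ^ b = (t - s) ^ (1 + a + b) * Beta (a + 1) (b + 1) := by
  rcases hst.eq_or_lt with rfl | hst
  · simp [zero_rpow hp.ne']
  · exact integral_sub_rpow_mul_sub_rpow_of_lt ha hb hst

lemma intervalIntegrable_sub_rpow_mul_sub_rpow (ha : -1 < a) (hb : -1 < b) (hst : s ≤ t) :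
    IntervalIntegrable (fun u => (u - s) ^ a * (t - u) ^ b) volume s t := by
  rcases hst.eq_or_lt with rfl | hst
  · exact .refl
  refine intervalIntegral.intervalIntegrable_of_integral_ne_zero ?_
  rw [integral_sub_rpow_mul_sub_rpow_of_lt ha hb hst]
  exact (mul_pos (rpow_pos_of_pos (sub_pos.2 hst) _) (Beta_pos (by linarith) (by linarith))).ne'

lemma intervalIntegrable_rpow_mul_sub_rpow {r : ℝ} (ha : -1 < a) (hb : -1 < b) (hr : 0 ≤ r)
    (hrs : r ≤ s) (hst : s ≤ t) :
    IntervalIntegrable (fun u => u ^ a * (t - u) ^ b) volume r s := by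
  have h0t : IntervalIntegrable (fun u => u ^ a * (t - u) ^ b) volume 0 t := by
    simpa only [sub_zero] using
      intervalIntegrable_sub_rpow_mul_sub_rpow ha hb (hr.trans (hrs.trans hst))
  exact h0t.mono_set (Set.uIcc_subset_uIcc (Set.mem_uIcc_of_le hr (hrs.trans hst))
    (Set.mem_uIcc_of_le (hr.trans hrs) hst))

lemma rpow_add_rpow_sub_two_mul_R (ha : -1 < a) (hb : -1 < b) (hp : 0 < 1 + a + b)
    (hs : 0 ≤ s) (hst : s ≤ t) :
    t ^ (1 + a + b) + s ^ (1 + a + b) - 2 * R a b t s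
      = (∫ u in s..t, u ^ a * (t - u) ^ b) / Beta (a + 1) (b + 1) := by
  have hB := (Beta_pos (by linarith : 0 < a + 1) (by linarith : 0 < b + 1)).ne'
  have hEval (c : ℝ) (hc : 0 ≤ c) :
      ∫ u in (0:ℝ)..c, u ^ a * (c - u) ^ b = c ^ (1 + a + b) * Beta (a + 1) (b + 1) := by
    simpa only [sub_zero] using integral_sub_rpow_mul_sub_rpow ha hb hp hc
  have hsplit := (intervalIntegral.integral_add_adjacent_intervals
    (intervalIntegrable_rpow_mul_sub_rpow ha hb le_rfl hs hst)
    (intervalIntegrable_rpow_mul_sub_rpow ha hb hs hst le_rfl)).trans (hEval t (hs.trans hst))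
  rw [R, min_eq_right hst]
  simp_rw [mul_add]
  rw [intervalIntegral.integral_add (intervalIntegrable_rpow_mul_sub_rpow ha hb le_rfl hs hst)
    (intervalIntegrable_rpow_mul_sub_rpow ha hb le_rfl hs le_rfl), hEval s hs]
  field_simp
  linear_combination -hsplit

lemma integral_rpow_mul_sub_rpow_le (ha : -1 < a) (hb : -1 < b) (ha0 : a ≤ 0) (hs : 0 ≤ s)
    (hst : s ≤ t) :
    ∫ u in s..t, u ^ a * (t - u) ^ b ≤ ∫ u in s..t, (u - s) ^ a * (t - u) ^ b := by
  refine intervalIntegral.integral_mono_on_of_le_Ioo hst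
    (intervalIntegrable_rpow_mul_sub_rpow ha hb hs hst le_rfl)
    (intervalIntegrable_sub_rpow_mul_sub_rpow ha hb hst) fun u hu => ?_
  exact mul_le_mul_of_nonneg_right (rpow_le_rpow_of_nonpos (sub_pos.2 hu.1) (by linarith) ha0)
    (rpow_nonneg (sub_nonneg.2 hu.2.le) b)

lemma rpow_add_rpow_sub_two_mul_R_le (ha : -1 < a) (hb : -1 < b) (ha0 : a ≤ 0)
    (hp : 0 < 1 + a + b) (hs : 0 ≤ s) (hst : s ≤ t) :
    t ^ (1 + a + b) + s ^ (1 + a + b) - 2 * R a b t s ≤ (t - s) ^ (1 + a + b) := by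
  rw [rpow_add_rpow_sub_two_mul_R ha hb hp hs hst,
    div_le_iff₀ (Beta_pos (by linarith) (by linarith)),
    ← integral_sub_rpow_mul_sub_rpow ha hb hp hst]
  exact integral_rpow_mul_sub_rpow_le ha hb ha0 hs hst

end

lemma R_comm (a b t s : ℝ) : R a b t s = R a b s t := by
  simp only [R, min_comm t s, add_comm ((t - _) ^ b)]

theorem stmt_1_general (a b : ℝ) (ha0 : a ≤ 0) (hb2 : |b| < 1 + a) :
    ∃ C > (0:ℝ), ∀ s t : ℝ, 0 ≤ s → 0 ≤ t →
      t ^ (1 + a + b) + s ^ (1 + a + b) - 2 * R a b t s ≤ C * |t - s| ^ (1 + a + b) := by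
  obtain ⟨hb_lo, hb_hi⟩ := abs_lt.mp hb2
  have ha : -1 < a := by linarith
  have hb : -1 < b := by linarith
  have hp : 0 < 1 + a + b := by linarith
  refine ⟨1, one_pos, fun s t hs ht => ?_⟩
  rw [one_mul]
  rcases le_total s t with hst | hts
  · rw [abs_of_nonneg (sub_nonneg.2 hst)]
    exact rpow_add_rpow_sub_two_mul_R_le ha hb ha0 hp hs hst
  · rw [abs_sub_comm, abs_of_nonneg (sub_nonneg.2 hts), R_comm, add_comm]
    exact rpow_add_rpow_sub_two_mul_R_le ha hb ha0 hp ht hts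

theorem stmt_1 (a b : ℝ) (ha : -1 < a) (ha0 : a ≤ 0) (hb1 : |b| < 1) (hb2 : |b| < 1 + a) :
    ∃ C > (0:ℝ), ∀ s t : ℝ, 0 ≤ s → 0 ≤ t →
      t ^ (1 + a + b) + s ^ (1 + a + b) - 2 * R a b t s ≤ C * |t - s| ^ (1 + a + b) :=
  stmt_1_general a b ha0 hb2
end

section
/- Let a, b be real numbers with a > -1, -1 < b < 0 and |b| < 1 + a. Then there exists a constant C > 0, depending only on a and b, such that for all s > r > 0: |s^{1+a+b} - R_{a,b}(s,r)| ≤ C · (s-r)^{1+b} · s^a. (The quantity inside the absolute value equals E[B^{a,b}_s (B^{a,b}_s - B^{a,b}_r)].) -/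
open Real MeasureTheory intervalIntegral

lemma beta_eq {a b : ℝ} (ha : -1 < a) (hb : -1 < b) :
    ∫ x in (0:ℝ)..1, x ^ a * (1 - x) ^ b = Beta (a+1) (b+1) := by
  have ha' : (0:ℝ) < a + 1 := by linarith
  have hb' : (0:ℝ) < b + 1 := by linarith
  have hu : 0 < ((a:ℂ)+1).re := by simp [ha']
  have hv : 0 < ((b:ℂ)+1).re := by simp [hb']
  have hkey := Complex.Gamma_mul_Gamma_eq_betaIntegral hu hv
  have hG : Real.Gamma (a+1+(b+1)) ≠ 0 := (Real.Gamma_pos_of_pos (by linarith)).ne'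
  have hbeta : Complex.betaIntegral ((a:ℂ)+1) ((b:ℂ)+1)
      = ((∫ x in (0:ℝ)..1, x ^ a * (1 - x) ^ b : ℝ) : ℂ) := by
    rw [Complex.betaIntegral, ← intervalIntegral.integral_ofReal]
    refine intervalIntegral.integral_congr fun x hx => ?_
    rw [Set.uIcc_of_le (by norm_num : (0:ℝ) ≤ 1)] at hx
    have h1 : (0:ℝ) ≤ x := hx.1
    have h2 : (0:ℝ) ≤ 1 - x := by linarith [hx.2]
    rw [Complex.ofReal_mul, Complex.ofReal_cpow h1, Complex.ofReal_cpow h2]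
    push_cast
    ring_nf
  rw [hbeta] at hkey
  have hG2 : Complex.Gamma ((a:ℂ)+1+((b:ℂ)+1)) ≠ 0 := by
    have : ((a:ℂ)+1+((b:ℂ)+1)) = ((a+1+(b+1):ℝ):ℂ) := by push_cast; ring
    rw [this, Complex.Gamma_ofReal]
    exact_mod_cast hG
  have : ((∫ x in (0:ℝ)..1, x ^ a * (1 - x) ^ b : ℝ) : ℂ)
      = ((Beta (a+1) (b+1) : ℝ) : ℂ) := by
    have e1 : ((a:ℂ)+1) = ((a+1:ℝ):ℂ) := by push_cast; ring
    have e2 : ((b:ℂ)+1) = ((b+1:ℝ):ℂ) := by push_cast; ring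
    rw [e1, e2, ← Complex.ofReal_add] at hkey
    rw [Complex.Gamma_ofReal, Complex.Gamma_ofReal, Complex.Gamma_ofReal] at hkey
    rw [Beta, Complex.ofReal_div, Complex.ofReal_mul,
      eq_div_iff (by exact_mod_cast hG : ((Real.Gamma (a+1+(b+1)) : ℝ) : ℂ) ≠ 0)]
    rw [hkey]; ring
  exact_mod_cast this


lemma intgL {a b s p q : ℝ} (ha : -1 < a) (hpq : p ≤ q) (hq : q < s) :
    IntervalIntegrable (fun u => u ^ a * (s - u) ^ b) volume p q := by
  refine (intervalIntegrable_rpow' ha).mul_continuousOn ?_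
  refine ContinuousOn.rpow_const (by fun_prop) fun x hx => Or.inl ?_
  rw [Set.uIcc_of_le hpq] at hx
  have := hx.2; intro hc; nlinarith [hx.1]

lemma intgR {a b s p q : ℝ} (hb : -1 < b) (hp : 0 < p) (hpq : p ≤ q) :
    IntervalIntegrable (fun u => u ^ a * (s - u) ^ b) volume p q := by
  have h1 : IntervalIntegrable (fun u : ℝ => (s - u) ^ b) volume p q := by
    have := (intervalIntegrable_rpow' hb (a := s - p) (b := s - q)).comp_sub_left s
    simpa using this
  refine h1.continuousOn_mul ?_
  refine ContinuousOn.rpow_const (by fun_prop) fun z hz => Or.inl ?_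
  rw [Set.uIcc_of_le hpq] at hz
  intro hc; nlinarith [hz.1]

lemma scaling {a b t : ℝ} (ht : 0 < t) :
    ∫ u in (0:ℝ)..t, u ^ a * (t - u) ^ b
      = t ^ (1+a+b) * ∫ x in (0:ℝ)..1, x ^ a * (1 - x) ^ b := by
  have h := smul_integral_comp_mul_left (fun u => u ^ a * (t - u) ^ b) t (a := 0) (b := 1)
  rw [mul_zero, mul_one] at h
  rw [← h]
  have hc : ∫ x in (0:ℝ)..1, (t*x) ^ a * (t - t*x) ^ b
      = ∫ x in (0:ℝ)..1, (t^a * t^b) * (x ^ a * (1 - x) ^ b) := by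
    refine intervalIntegral.integral_congr fun x hx => ?_
    rw [Set.uIcc_of_le (by norm_num : (0:ℝ) ≤ 1)] at hx
    have h1 : t - t*x = t * (1-x) := by ring
    rw [h1, Real.mul_rpow ht.le hx.1, Real.mul_rpow ht.le (by linarith [hx.2])]
    ring
  simp only [hc, intervalIntegral.integral_const_mul, smul_eq_mul]
  rw [← mul_assoc]
  congr 1
  rw [show (1+a+b) = 1+(a+b) by ring, Real.rpow_add ht, Real.rpow_add ht, Real.rpow_one]

lemma half_pow_le {c s u : ℝ} (hs : 0 < s) (h1 : s/2 ≤ u) (h2 : u ≤ s) :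
    u ^ c ≤ 2 ^ |c| * s ^ c := by
  have h21 : (1:ℝ) ≤ 2 ^ |c| := by
    calc (1:ℝ) = 2 ^ (0:ℝ) := (Real.rpow_zero 2).symm
      _ ≤ 2 ^ |c| := Real.rpow_le_rpow_of_exponent_le one_le_two (abs_nonneg c)
  rcases le_or_gt 0 c with hc | hc
  · calc u ^ c ≤ s ^ c := Real.rpow_le_rpow (by linarith) h2 hc
      _ ≤ 2 ^ |c| * s ^ c := le_mul_of_one_le_left (Real.rpow_nonneg hs.le c) h21
  · calc u ^ c ≤ (s/2) ^ c :=
        Real.rpow_le_rpow_of_nonpos (half_pos hs) h1 hc.le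
      _ = 2 ^ |c| * s ^ c := by
        rw [Real.div_rpow hs.le (by norm_num), div_eq_mul_inv,
          ← Real.rpow_neg (by norm_num), abs_of_neg hc]
        ring

lemma int_sb {b s p : ℝ} (hb : -1 < b) (hp : p ≤ s) :
    ∫ u in p..s, (s-u) ^ b = (s-p) ^ (b+1) / (b+1) := by
  rw [intervalIntegral.integral_comp_sub_left (fun v => v ^ b) s, sub_self,
    integral_rpow (Or.inl hb), Real.zero_rpow (by linarith : b + 1 ≠ 0)]
  ring

lemma bdR {a b s p : ℝ} (hb0 : -1 < b) (hb1 : b < 0) (hs : 0 < s)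
    (h1 : s/2 ≤ p) (h2 : p ≤ s) :
    ∫ u in p..s, u ^ a * (s-u) ^ b ≤ (2 ^ |a| * s ^ a) * ((s-p) ^ (b+1) / (b+1)) := by
  have hp : 0 < p := lt_of_lt_of_le (half_pos hs) h1
  have hint : IntervalIntegrable (fun u => (2 ^ |a| * s ^ a) * (s-u) ^ b) volume p s := by
    have h := ((intervalIntegrable_rpow' hb0 (a := s - p) (b := s - s)).comp_sub_left s)
    simp only [sub_sub_cancel] at h
    exact h.const_mul _
  calc ∫ u in p..s, u ^ a * (s-u) ^ b
      ≤ ∫ u in p..s, (2 ^ |a| * s ^ a) * (s-u) ^ b := by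
        refine intervalIntegral.integral_mono_on h2 (intgR hb0 hp h2) hint fun u hu => ?_
        exact mul_le_mul_of_nonneg_right (half_pow_le hs (le_trans h1 hu.1) hu.2)
          (Real.rpow_nonneg (by linarith [hu.2]) b)
    _ = (2 ^ |a| * s ^ a) * ((s-p) ^ (b+1) / (b+1)) := by
        rw [intervalIntegral.integral_const_mul, int_sb hb0 h2]

lemma bdL {a b s r : ℝ} (ha : -1 < a) (hb1 : b < 0) (hs : 0 < s)
    (hr : 0 ≤ r) (hrs : r ≤ s/2) :
    ∫ u in r..s/2, u ^ a * (s-u) ^ b ≤ (s/2) ^ (a+1) / (a+1) * (s/2) ^ b := by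
  have ha1 : (0:ℝ) < a + 1 := by linarith
  calc ∫ u in r..s/2, u ^ a * (s-u) ^ b
      ≤ ∫ u in r..s/2, u ^ a * (s/2) ^ b := by
        refine intervalIntegral.integral_mono_on hrs (intgL ha hrs (by linarith))
          ((intervalIntegrable_rpow' ha).mul_const _) fun u hu => ?_
        refine mul_le_mul_of_nonneg_left ?_ (Real.rpow_nonneg (le_trans hr hu.1) a)
        exact Real.rpow_le_rpow_of_nonpos (half_pos hs) (by linarith [hu.2]) hb1.le
    _ = ((s/2) ^ (a+1) - r ^ (a+1)) / (a+1) * (s/2) ^ b := by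
        rw [intervalIntegral.integral_mul_const, integral_rpow (Or.inl ha)]
    _ ≤ (s/2) ^ (a+1) / (a+1) * (s/2) ^ b := by
        have h1 : 0 ≤ r ^ (a+1) := Real.rpow_nonneg hr _
        have h2 : (0:ℝ) ≤ (s/2) ^ b := Real.rpow_nonneg (half_pos hs).le _
        gcongr
        exact sub_le_self _ h1

lemma bdI {a b s r : ℝ} (ha : -1 < a) (hb0 : -1 < b) (hb1 : b < 0)
    (hr : 0 < r) (hrs : r < s) :
    ∫ u in r..s, u ^ a * (s-u) ^ b
      ≤ (2 ^ |a| * (1/(b+1) + 1/(a+1))) * s ^ a * (s-r) ^ (b+1) := by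
  have hs : 0 < s := hr.trans hrs
  have ha1 : (0:ℝ) < a + 1 := by linarith
  have hb1' : (0:ℝ) < b + 1 := by linarith
  rcases le_or_gt (s/2) r with h | h
  · have h1 := bdR (a := a) hb0 hb1 hs h hrs.le
    have h2 : (0:ℝ) ≤ 2 ^ |a| * s ^ a * (s-r) ^ (b+1) * (1/(a+1)) :=
      mul_nonneg (mul_nonneg (mul_nonneg (Real.rpow_nonneg (by norm_num) _)
        (Real.rpow_nonneg hs.le _)) (Real.rpow_nonneg (by linarith) _)) (by positivity)
    calc ∫ u in r..s, u ^ a * (s-u) ^ b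
        ≤ (2 ^ |a| * s ^ a) * ((s-r) ^ (b+1) / (b+1)) := h1
      _ = 2 ^ |a| * s ^ a * (s-r) ^ (b+1) * (1/(b+1)) := by ring
      _ ≤ (2 ^ |a| * (1/(b+1) + 1/(a+1))) * s ^ a * (s-r) ^ (b+1) := by linarith
  · have hhalf : s - s/2 = s/2 := by ring
    rw [← integral_add_adjacent_intervals (b := s/2)
      (intgL ha (by linarith) (by linarith)) (intgR hb0 (half_pos hs) (by linarith))]
    have h1 := bdL (b := b) ha hb1 hs hr.le h.le
    have h2 := bdR (a := a) hb0 hb1 hs (le_refl (s/2)) (by linarith)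
    rw [hhalf] at h2
    have e0 : (s/2) ^ (a+1) * (s/2) ^ b = (s/2) ^ a * (s/2) ^ (b+1) := by
      rw [← Real.rpow_add (half_pos hs), ← Real.rpow_add (half_pos hs)]; ring_nf
    have eA : (s/2) ^ a ≤ 2 ^ |a| * s ^ a := half_pow_le hs le_rfl (by linarith)
    have eB : (s/2) ^ (b+1) ≤ (s-r) ^ (b+1) :=
      Real.rpow_le_rpow (by positivity) (by linarith) hb1'.le
    have e1 : (s/2) ^ (a+1) / (a+1) * (s/2) ^ b
        ≤ 2 ^ |a| * s ^ a * (s-r) ^ (b+1) * (1/(a+1)) := by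
      calc (s/2) ^ (a+1) / (a+1) * (s/2) ^ b
          = ((s/2) ^ a * (s/2) ^ (b+1)) * (1/(a+1)) := by rw [← e0]; ring
        _ ≤ ((2 ^ |a| * s ^ a) * ((s-r) ^ (b+1))) * (1/(a+1)) := by
            have h4 : (0:ℝ) ≤ (s/2) ^ (b+1) := Real.rpow_nonneg (by linarith) _
            have h5 : (0:ℝ) ≤ 2 ^ |a| * s ^ a :=
              mul_nonneg (Real.rpow_nonneg (by norm_num) _) (Real.rpow_nonneg hs.le _)
            have := mul_le_mul eA eB h4 h5
            have h3 : (0:ℝ) ≤ 1/(a+1) := by positivity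
            exact mul_le_mul_of_nonneg_right this h3
        _ = 2 ^ |a| * s ^ a * (s-r) ^ (b+1) * (1/(a+1)) := by ring
    have e2 : (2 ^ |a| * s ^ a) * ((s/2) ^ (b+1) / (b+1))
        ≤ 2 ^ |a| * s ^ a * (s-r) ^ (b+1) * (1/(b+1)) := by
      calc (2 ^ |a| * s ^ a) * ((s/2) ^ (b+1) / (b+1))
          = ((s/2) ^ (b+1)) * ((2 ^ |a| * s ^ a) * (1/(b+1))) := by ring
        _ ≤ ((s-r) ^ (b+1)) * ((2 ^ |a| * s ^ a) * (1/(b+1))) := by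
            refine mul_le_mul_of_nonneg_right eB ?_
            exact mul_nonneg (mul_nonneg (Real.rpow_nonneg (by norm_num) _)
              (Real.rpow_nonneg hs.le _)) (by positivity)
        _ = 2 ^ |a| * s ^ a * (s-r) ^ (b+1) * (1/(b+1)) := by ring
    have := add_le_add (h1.trans e1) (h2.trans e2)
    calc (∫ u in r..(s/2), u ^ a * (s-u) ^ b) + ∫ u in (s/2)..s, u ^ a * (s-u) ^ b
        ≤ 2 ^ |a| * s ^ a * (s-r) ^ (b+1) * (1/(a+1))
          + 2 ^ |a| * s ^ a * (s-r) ^ (b+1) * (1/(b+1)) := this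
      _ = (2 ^ |a| * (1/(b+1) + 1/(a+1))) * s ^ a * (s-r) ^ (b+1) := by ring

lemma bdII {a b s r : ℝ} (hb0 : -1 < b) (hb1 : b < 0) (hab : -1 < a + b)
    (hr : 0 < r) (hrs : r < s) :
    s ^ (1+a+b) - r ^ (1+a+b)
      ≤ (2 ^ (b+1) + (1+a+b) * 2 ^ |a+b|) * s ^ a * (s-r) ^ (b+1) := by
  have hs : 0 < s := hr.trans hrs
  have hg : (0:ℝ) < 1 + a + b := by linarith
  have hb1' : (0:ℝ) < b + 1 := by linarith
  have hsr : (0:ℝ) < s - r := by linarith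
  have hsa : (0:ℝ) ≤ s ^ a := Real.rpow_nonneg hs.le _
  have hsrb : (0:ℝ) ≤ (s-r) ^ (b+1) := Real.rpow_nonneg hsr.le _
  have hrest : (0:ℝ) ≤ (1+a+b) * 2 ^ |a+b| * s ^ a * (s-r) ^ (b+1) :=
    mul_nonneg (mul_nonneg (mul_nonneg hg.le (Real.rpow_nonneg (by norm_num) _)) hsa) hsrb
  have hf : (0:ℝ) ≤ 2 ^ (b+1) * s ^ a * (s-r) ^ (b+1) :=
    mul_nonneg (mul_nonneg (Real.rpow_nonneg (by norm_num) _) hsa) hsrb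
  rcases le_or_gt r (s/2) with h | h
  · have e1 : s ^ (1+a+b) = s ^ a * s ^ (b+1) := by
      rw [← Real.rpow_add hs]; ring_nf
    have e2 : s ^ (b+1) ≤ 2 ^ (b+1) * (s-r) ^ (b+1) := by
      rw [← Real.mul_rpow (by norm_num) hsr.le]
      exact Real.rpow_le_rpow hs.le (by linarith) hb1'.le
    have e3 : s ^ a * s ^ (b+1) ≤ s ^ a * (2 ^ (b+1) * (s-r) ^ (b+1)) :=
      mul_le_mul_of_nonneg_left e2 hsa
    have e4 : (0:ℝ) ≤ r ^ (1+a+b) := Real.rpow_nonneg hr.le _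
    calc s ^ (1+a+b) - r ^ (1+a+b) ≤ s ^ (1+a+b) := by linarith
      _ = s ^ a * s ^ (b+1) := e1
      _ ≤ s ^ a * (2 ^ (b+1) * (s-r) ^ (b+1)) := e3
      _ ≤ (2 ^ (b+1) + (1+a+b) * 2 ^ |a+b|) * s ^ a * (s-r) ^ (b+1) := by
          linarith [hrest]
  · have key : s ^ (1+a+b) - r ^ (1+a+b) = (1+a+b) * ∫ u in r..s, u ^ (a+b) := by
      rw [integral_rpow (Or.inl hab), show a+b+1 = 1+a+b from by ring]
      field_simp
    have hbd : ∫ u in r..s, u ^ (a+b) ≤ (s - r) * (2 ^ |a+b| * s ^ (a+b)) := by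
      calc ∫ u in r..s, u ^ (a+b)
          ≤ ∫ _u in r..s, (2 ^ |a+b| * s ^ (a+b)) := by
            refine intervalIntegral.integral_mono_on hrs.le
              (intervalIntegrable_rpow' hab) intervalIntegrable_const fun u hu => ?_
            exact half_pow_le hs (le_trans h.le hu.1) hu.2
        _ = (s - r) * (2 ^ |a+b| * s ^ (a+b)) := by
            rw [intervalIntegral.integral_const, smul_eq_mul]
    have hstep : (s-r) * s ^ b ≤ (s-r) ^ (b+1) := by
      have e5 : (s-r) ^ (b+1) = (s-r) ^ b * (s-r) := by
        rw [Real.rpow_add hsr b 1, Real.rpow_one]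
      rw [e5]
      have : s ^ b ≤ (s-r) ^ b :=
        Real.rpow_le_rpow_of_nonpos hsr (by linarith) hb1.le
      nlinarith [hsr.le]
    calc s ^ (1+a+b) - r ^ (1+a+b) = (1+a+b) * ∫ u in r..s, u ^ (a+b) := key
      _ ≤ (1+a+b) * ((s - r) * (2 ^ |a+b| * s ^ (a+b))) :=
          mul_le_mul_of_nonneg_left hbd hg.le
      _ = ((1+a+b) * 2 ^ |a+b|) * s ^ a * ((s-r) * s ^ b) := by
          rw [Real.rpow_add hs a b]; ring
      _ ≤ ((1+a+b) * 2 ^ |a+b|) * s ^ a * ((s-r) ^ (b+1)) := by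
          refine mul_le_mul_of_nonneg_left hstep ?_
          exact mul_nonneg (mul_nonneg hg.le (Real.rpow_nonneg (by norm_num) _)) hsa
      _ ≤ (2 ^ (b+1) + (1+a+b) * 2 ^ |a+b|) * s ^ a * (s-r) ^ (b+1) := by
          linarith [hf]

theorem stmt_8 (a b : ℝ) (ha : -1 < a) (hb0 : -1 < b) (hb1 : b < 0) (hb2 : |b| < 1 + a) :
    ∃ C > (0:ℝ), ∀ s r : ℝ, 0 < r → r < s →
      |s ^ (1 + a + b) - R a b s r| ≤ C * (s - r) ^ (1 + b) * s ^ a := by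
  have hb' : -b < 1 + a := by rwa [abs_of_neg hb1] at hb2
  have hab : -1 < a + b := by linarith
  have hg : (0:ℝ) < 1 + a + b := by linarith
  have ha1 : (0:ℝ) < a + 1 := by linarith
  have hb1' : (0:ℝ) < b + 1 := by linarith
  have hBpos : 0 < Beta (a+1) (b+1) := by
    unfold Beta
    exact div_pos (mul_pos (Real.Gamma_pos_of_pos ha1) (Real.Gamma_pos_of_pos hb1'))
      (Real.Gamma_pos_of_pos (by linarith))
  set B := Beta (a+1) (b+1) with hBdef
  have hK1 : (0:ℝ) < 2 ^ |a| * (1/(b+1) + 1/(a+1)) := by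
    refine mul_pos (Real.rpow_pos_of_pos (by norm_num) _) ?_
    have := one_div_pos.mpr ha1
    have := one_div_pos.mpr hb1'
    linarith
  have hK2 : (0:ℝ) < 2 ^ (b+1) + (1+a+b) * 2 ^ |a+b| := by
    have h1 := Real.rpow_pos_of_pos (show (0:ℝ) < 2 by norm_num) (b+1)
    have h2 := Real.rpow_pos_of_pos (show (0:ℝ) < 2 by norm_num) |a+b|
    nlinarith
  set K1 := 2 ^ |a| * (1/(b+1) + 1/(a+1)) with hK1def
  set K2 := 2 ^ (b+1) + (1+a+b) * 2 ^ |a+b| with hK2def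
  refine ⟨K2/2 + K1/(2*B), by positivity, fun s r hr hrs => ?_⟩
  have hs : 0 < s := hr.trans hrs
  have hmin : min s r = r := min_eq_right hrs.le
  have J := beta_eq ha hb0
  have full_s : ∫ u in (0:ℝ)..s, u ^ a * (s-u) ^ b = B * s ^ (1+a+b) := by
    rw [scaling hs, J]; ring
  have full_r : ∫ u in (0:ℝ)..r, u ^ a * (r-u) ^ b = B * r ^ (1+a+b) := by
    rw [scaling hr, J]; ring
  set I := ∫ u in r..s, u ^ a * (s-u) ^ b with hIdef
  have isplit : (∫ u in (0:ℝ)..r, u ^ a * (s-u) ^ b) + I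
      = ∫ u in (0:ℝ)..s, u ^ a * (s-u) ^ b :=
    integral_add_adjacent_intervals (intgL ha hr.le hrs) (intgR hb0 hr hrs.le)
  have h0r : ∫ u in (0:ℝ)..r, u ^ a * (s-u) ^ b = B * s ^ (1+a+b) - I := by
    rw [← full_s, ← isplit]; ring
  have int2 : IntervalIntegrable (fun u => u ^ a * (r-u) ^ b) volume 0 r :=
    (intgL (s := r) ha (by linarith) (by linarith)).trans
      (intgR (s := r) hb0 (half_pos hr) (by linarith))
  have hsum : ∫ u in (0:ℝ)..r, u ^ a * ((s-u) ^ b + (r-u) ^ b)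
      = (∫ u in (0:ℝ)..r, u ^ a * (s-u) ^ b) + ∫ u in (0:ℝ)..r, u ^ a * (r-u) ^ b := by
    rw [← intervalIntegral.integral_add (intgL ha hr.le hrs) int2]
    congr 1; funext u; ring
  have hRval : R a b s r = (1/(2*B)) * ((B * s ^ (1+a+b) - I) + B * r ^ (1+a+b)) := by
    rw [R, hmin, hsum, h0r, full_r]
  have hD : s ^ (1+a+b) - R a b s r
      = (1/2) * (s ^ (1+a+b) - r ^ (1+a+b)) + I / (2*B) := by
    rw [hRval]; field_simp; ring
  have hInn : 0 ≤ I := by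
    refine intervalIntegral.integral_nonneg hrs.le fun u hu => ?_
    exact mul_nonneg (Real.rpow_nonneg (le_trans hr.le hu.1) _)
      (Real.rpow_nonneg (by linarith [hu.2]) _)
  have hmono : r ^ (1+a+b) ≤ s ^ (1+a+b) := Real.rpow_le_rpow hr.le hrs.le hg.le
  rw [hD, abs_of_nonneg (add_nonneg (by linarith) (div_nonneg hInn (by linarith)))]
  have hI := bdI ha hb0 hb1 hr hrs
  have hII := bdII hb0 hb1 hab hr hrs
  rw [show (1:ℝ) + b = b + 1 from by ring]
  have hX : (0:ℝ) ≤ (s-r) ^ (b+1) := Real.rpow_nonneg (by linarith) _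
  have step2 : I / (2*B) ≤ (K1 * s ^ a * (s-r) ^ (b+1)) / (2*B) := by gcongr
  have ering : (1/2) * (K2 * s ^ a * (s-r) ^ (b+1)) + (K1 * s ^ a * (s-r) ^ (b+1)) / (2*B)
      = (K2/2 + K1/(2*B)) * (s-r) ^ (b+1) * s ^ a := by
    field_simp
  linarith [hII, step2]
end

section
/- Let a, b be real numbers with a > -1, -1 < b < 0 and |b| < 1 + a. Then there exists a constant C > 0, depending only on a and b, such that for all t > s > r > 0: |R_{a,b}(r,t) - R_{a,b}(r,s)| ≤ C · (t-s)^{1+b} · r^a. (The quantity inside the absolute value equals E[B^{a,b}_r (B^{a,b}_t - B^{a,b}_s)].) -/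
open Real MeasureTheory

private lemma key1 {b x δ : ℝ} (hb0 : -1 < b) (hb1 : b < 0) (hx : 0 < x) (hδ : 0 < δ) :
    x ^ b - (x + δ) ^ b ≤ δ ^ (1 + b) / x := by
  have hxδ : (0:ℝ) < x + δ := by linarith
  rcases le_total x δ with h | h
  · have h1 : x ^ b - (x + δ) ^ b ≤ x ^ b := by
      have := Real.rpow_nonneg hxδ.le b; linarith
    have h2 : x ^ b = x ^ (1 + b) / x := by
      rw [Real.rpow_add hx, Real.rpow_one]
      field_simp
    have h3 : x ^ (1 + b) ≤ δ ^ (1 + b) := Real.rpow_le_rpow hx.le h (by linarith)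
    calc x ^ b - (x + δ) ^ b ≤ x ^ b := h1
      _ = x ^ (1 + b) / x := h2
      _ ≤ δ ^ (1 + b) / x := by gcongr
  · -- δ ≤ x
    set w : ℝ := (x + δ) / x with hw_def
    have hw1 : 1 ≤ w := by rw [hw_def, le_div_iff₀ hx]; linarith
    have hw0 : 0 < w := by linarith
    have hwinv : w ^ (-1:ℝ) ≤ w ^ b := Real.rpow_le_rpow_of_exponent_le hw1 (by linarith)
    have hinv : w⁻¹ ≤ w ^ b := by rwa [Real.rpow_neg_one] at hwinv
    have h2le : (2:ℝ) ≤ w + w⁻¹ := by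
      have h := sq_nonneg (w - 1)
      have hne : w ≠ 0 := ne_of_gt hw0
      have : w * w⁻¹ = 1 := mul_inv_cancel₀ hne
      nlinarith
    have h2le' : (2:ℝ) ≤ w + w ^ b := by linarith
    have hxb : 0 < x ^ b := Real.rpow_pos_of_pos hx b
    have h4 : 2 * x ^ b ≤ w * x ^ b + w ^ b * x ^ b := by nlinarith
    have h5 : w ^ b * x ^ b = (x + δ) ^ b := by
      rw [hw_def, Real.div_rpow hxδ.le hx.le]
      field_simp
    have hxne : x ≠ 0 := ne_of_gt hx
    have e1 : w * x ^ b = δ * x ^ b / x + x ^ b := by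
      rw [hw_def]; field_simp; ring
    have h6 : x ^ b - (x + δ) ^ b ≤ δ * x ^ b / x := by
      rw [e1] at h4; rw [h5] at h4; linarith
    have h7 : x ^ b ≤ δ ^ b := Real.rpow_le_rpow_of_nonpos hδ h hb1.le
    have h9 : δ * δ ^ b = δ ^ (1 + b) := by
      rw [Real.rpow_add hδ, Real.rpow_one]
    calc x ^ b - (x + δ) ^ b ≤ δ * x ^ b / x := h6
      _ ≤ δ * δ ^ b / x := by gcongr
      _ = δ ^ (1 + b) / x := by rw [h9]

private lemma subadd {x y p : ℝ} (hx : 0 ≤ x) (hy : 0 ≤ y) (hp : 0 ≤ p) (hp1 : p ≤ 1) :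
    (x + y) ^ p ≤ x ^ p + y ^ p := by
  have h := NNReal.rpow_add_le_add_rpow x.toNNReal y.toNNReal hp hp1
  have h' := NNReal.coe_le_coe.2 h
  rw [NNReal.coe_rpow, NNReal.coe_add, NNReal.coe_add, NNReal.coe_rpow, NNReal.coe_rpow,
    Real.coe_toNNReal x hx, Real.coe_toNNReal y hy] at h'
  exact h'

private lemma integ {a b : ℝ} (ha : -1 < a) (hb : -1 < b) {r x : ℝ} (hr : 0 < r) (hx : r ≤ x) :
    IntervalIntegrable (fun u => u ^ a * (x - u) ^ b) volume 0 r := by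
  have h2 : (0:ℝ) < r / 2 := by linarith
  apply IntervalIntegrable.trans (b := r / 2)
  · apply (intervalIntegral.intervalIntegrable_rpow' ha).mul_continuousOn
    apply ContinuousOn.rpow_const (continuousOn_const.sub continuousOn_id)
    intro u hu
    rw [Set.uIcc_of_le h2.le] at hu
    left
    have : u ≤ r / 2 := hu.2
    have : 0 < x - u := by linarith
    exact ne_of_gt this
  · have hbase : IntervalIntegrable (fun v : ℝ => v ^ b) volume (x - r) (x - (r / 2)) :=
      intervalIntegral.intervalIntegrable_rpow' hb
    have h1 := (hbase.comp_sub_left x).symm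
    have h2' : x - (x - r) = r := by ring
    have h3' : x - (x - r / 2) = r / 2 := by ring
    rw [h2', h3'] at h1
    apply h1.continuousOn_mul
    apply ContinuousOn.rpow_const continuousOn_id
    intro u hu
    rw [Set.uIcc_of_le (by linarith : r / 2 ≤ r)] at hu
    left
    have h4 : r / 2 ≤ u := hu.1
    exact ne_of_gt (by linarith : (0:ℝ) < u)

set_option maxHeartbeats 1000000 in
theorem stmt_10 (a b : ℝ) (ha : -1 < a) (hb0 : -1 < b) (hb1 : b < 0) (hb2 : |b| < 1 + a) :
    ∃ C > (0:ℝ), ∀ t s r : ℝ, 0 < r → r < s → s < t →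
      |R a b r t - R a b r s| ≤ C * (t - s) ^ (1 + b) * r ^ a := by
  have h1a : (0:ℝ) < 1 + a := by linarith
  have h1b : (0:ℝ) < 1 + b := by linarith
  have hBeta : 0 < Beta (a + 1) (b + 1) := by
    have g1 : 0 < Real.Gamma (a + 1) := Real.Gamma_pos_of_pos (by linarith)
    have g2 : 0 < Real.Gamma (b + 1) := Real.Gamma_pos_of_pos (by linarith)
    have g3 : 0 < Real.Gamma (a + 1 + (b + 1)) := Real.Gamma_pos_of_pos (by linarith)
    exact div_pos (mul_pos g1 g2) g3
  set c : ℝ := 1 / (2 * Beta (a + 1) (b + 1)) with hc_def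
  have hc : 0 < c := by positivity
  set K : ℝ := max 1 ((2:ℝ) ^ (-a)) with hK_def
  have hK : 0 < K := lt_of_lt_of_le one_pos (le_max_left _ _)
  have h2a : (0:ℝ) < (2:ℝ) ^ (-a) := Real.rpow_pos_of_pos (by norm_num) _
  refine ⟨c * ((2:ℝ) ^ (-a) / (1 + a) + K / (1 + b)), by positivity, ?_⟩
  intro t s r hr hrs hst
  set δ := t - s with hδ_def
  have hδ : 0 < δ := by simp only [hδ_def]; linarith
  have hrt : r < t := hrs.trans hst
  have I_r := integ ha hb0 hr (le_refl r)
  have I_s := integ ha hb0 hr hrs.le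
  have I_t := integ ha hb0 hr hrt.le
  have hmin_t : min r t = r := min_eq_left hrt.le
  have hmin_s : min r s = r := min_eq_left hrs.le
  have hRt : R a b r t
      = c * ((∫ u in (0:ℝ)..r, u ^ a * (r - u) ^ b) + ∫ u in (0:ℝ)..r, u ^ a * (t - u) ^ b) := by
    rw [R, hmin_t, ← intervalIntegral.integral_add I_r I_t]
    congr 1
    apply intervalIntegral.integral_congr
    intro u _
    ring
  have hRs : R a b r s
      = c * ((∫ u in (0:ℝ)..r, u ^ a * (r - u) ^ b) + ∫ u in (0:ℝ)..r, u ^ a * (s - u) ^ b) := by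
    rw [R, hmin_s, ← intervalIntegral.integral_add I_r I_s]
    congr 1
    apply intervalIntegral.integral_congr
    intro u _
    ring
  set As := ∫ u in (0:ℝ)..r, u ^ a * (s - u) ^ b with hAs_def
  set At := ∫ u in (0:ℝ)..r, u ^ a * (t - u) ^ b with hAt_def
  have hdiff : R a b r t - R a b r s = c * (At - As) := by rw [hRt, hRs]; ring
  have hpt : ∀ u ∈ Set.Icc (0:ℝ) r, u ^ a * (t - u) ^ b ≤ u ^ a * (s - u) ^ b := by
    intro u hu
    have hsu : 0 < s - u := by have := hu.2; linarith
    have h := Real.rpow_le_rpow_of_nonpos hsu (by linarith : s - u ≤ t - u) hb1.le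
    exact mul_le_mul_of_nonneg_left h (Real.rpow_nonneg hu.1 a)
  have hAts : At ≤ As := intervalIntegral.integral_mono_on hr.le I_t I_s hpt
  have habs : |R a b r t - R a b r s| = c * (As - At) := by
    rw [hdiff, abs_mul, abs_of_pos hc, abs_of_nonpos (by linarith)]
    ring
  have hIst : IntervalIntegrable (fun u => u ^ a * (s - u) ^ b - u ^ a * (t - u) ^ b)
      volume 0 r := I_s.sub I_t
  have hsub1 : Set.uIcc (0:ℝ) (r / 2) ⊆ Set.uIcc (0:ℝ) r := by
    rw [Set.uIcc_of_le (by linarith : (0:ℝ) ≤ r / 2), Set.uIcc_of_le hr.le]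
    exact Set.Icc_subset_Icc (le_refl _) (by linarith)
  have hsub2 : Set.uIcc (r / 2) r ⊆ Set.uIcc (0:ℝ) r := by
    rw [Set.uIcc_of_le (by linarith : r / 2 ≤ r), Set.uIcc_of_le hr.le]
    exact Set.Icc_subset_Icc (by linarith) (le_refl _)
  have hG : As - At
      = (∫ u in (0:ℝ)..(r/2), (u ^ a * (s - u) ^ b - u ^ a * (t - u) ^ b))
        + ∫ u in (r/2)..r, (u ^ a * (s - u) ^ b - u ^ a * (t - u) ^ b) := by
    rw [intervalIntegral.integral_add_adjacent_intervals (hIst.mono_set hsub1)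
      (hIst.mono_set hsub2), ← intervalIntegral.integral_sub I_s I_t]
  -- Bound on [0, r/2]
  have hbound1 : (∫ u in (0:ℝ)..(r/2), (u ^ a * (s - u) ^ b - u ^ a * (t - u) ^ b))
      ≤ ∫ u in (0:ℝ)..(r/2), u ^ a * (δ ^ (1 + b) * (2 / r)) := by
    apply intervalIntegral.integral_mono_on (by linarith) (hIst.mono_set hsub1)
      ((intervalIntegral.intervalIntegrable_rpow' ha).mul_const _)
    intro u hu
    obtain ⟨hu0, hu2⟩ := hu
    have hsu0 : 0 < s - u := by linarith
    have e : t - u = (s - u) + δ := by rw [hδ_def]; ring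
    have k := key1 hb0 hb1 hsu0 hδ
    have hua : 0 ≤ u ^ a := Real.rpow_nonneg hu0 a
    have step : (s - u) ^ b - (t - u) ^ b ≤ δ ^ (1 + b) * (2 / r) := by
      rw [e]
      refine k.trans ?_
      have hδp : 0 < δ ^ (1 + b) := Real.rpow_pos_of_pos hδ _
      calc δ ^ (1 + b) / (s - u) ≤ δ ^ (1 + b) / (r / 2) := by
            apply div_le_div_of_nonneg_left hδp.le (by linarith) (by linarith)
        _ = δ ^ (1 + b) * (2 / r) := by
            field_simp
    calc u ^ a * (s - u) ^ b - u ^ a * (t - u) ^ b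
        = u ^ a * ((s - u) ^ b - (t - u) ^ b) := by ring
      _ ≤ u ^ a * (δ ^ (1 + b) * (2 / r)) := mul_le_mul_of_nonneg_left step hua
  have hval1 : (∫ u in (0:ℝ)..(r/2), u ^ a * (δ ^ (1 + b) * (2 / r)))
      = δ ^ (1 + b) * ((2:ℝ) ^ (-a) / (1 + a)) * r ^ a := by
    rw [intervalIntegral.integral_mul_const, integral_rpow (Or.inl ha)]
    have hz : (0:ℝ) ^ (a + 1) = 0 := Real.zero_rpow (by linarith)
    rw [hz]
    have e1 : (r / 2) ^ (a + 1) = (r / 2) ^ a * (r / 2) := by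
      rw [Real.rpow_add (by linarith : (0:ℝ) < r / 2), Real.rpow_one]
    have e2 : (r / 2) ^ a = r ^ a * (2:ℝ) ^ (-a) := by
      rw [Real.div_rpow hr.le (by norm_num), Real.rpow_neg (by norm_num)]
      ring
    rw [e1, e2, sub_zero]
    have hcanc : (r / 2) * (2 / r) = 1 := by
      field_simp
    calc r ^ a * (2:ℝ) ^ (-a) * (r / 2) / (a + 1) * (δ ^ (1 + b) * (2 / r))
        = r ^ a * (2:ℝ) ^ (-a) * ((r / 2) * (2 / r)) * δ ^ (1 + b) / (a + 1) := by ring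
      _ = δ ^ (1 + b) * ((2:ℝ) ^ (-a) / (1 + a)) * r ^ a := by rw [hcanc]; ring
  -- Bound on [r/2, r]
  have hcont_s : ContinuousOn (fun u : ℝ => (s - u) ^ b) (Set.uIcc (r/2) r) := by
    apply ContinuousOn.rpow_const (continuousOn_const.sub continuousOn_id)
    intro u hu
    rw [Set.uIcc_of_le (by linarith : r / 2 ≤ r)] at hu
    left
    have : u ≤ r := hu.2
    have : 0 < s - u := by linarith
    exact ne_of_gt this
  have hcont_t : ContinuousOn (fun u : ℝ => (t - u) ^ b) (Set.uIcc (r/2) r) := by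
    apply ContinuousOn.rpow_const (continuousOn_const.sub continuousOn_id)
    intro u hu
    rw [Set.uIcc_of_le (by linarith : r / 2 ≤ r)] at hu
    left
    have : u ≤ r := hu.2
    have : 0 < t - u := by linarith
    exact ne_of_gt this
  have hint_s : IntervalIntegrable (fun u : ℝ => (s - u) ^ b) volume (r/2) r :=
    hcont_s.intervalIntegrable
  have hint_t : IntervalIntegrable (fun u : ℝ => (t - u) ^ b) volume (r/2) r :=
    hcont_t.intervalIntegrable
  have hbound2 : (∫ u in (r/2)..r, (u ^ a * (s - u) ^ b - u ^ a * (t - u) ^ b))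
      ≤ ∫ u in (r/2)..r, (K * r ^ a) * ((s - u) ^ b - (t - u) ^ b) := by
    apply intervalIntegral.integral_mono_on (by linarith) (hIst.mono_set hsub2)
      ((hint_s.sub hint_t).const_mul _)
    intro u hu
    obtain ⟨hu1, hu2⟩ := hu
    have hu0 : 0 < u := by linarith
    have hua : u ^ a ≤ K * r ^ a := by
      rcases le_or_gt 0 a with haa | haa
      · have h1 : u ^ a ≤ r ^ a := Real.rpow_le_rpow hu0.le hu2 haa
        have h2 : r ^ a ≤ K * r ^ a :=
          le_mul_of_one_le_left (Real.rpow_nonneg hr.le a) (le_max_left _ _)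
        linarith
      · have h1 : u ^ a ≤ (r / 2) ^ a := Real.rpow_le_rpow_of_nonpos (by linarith) hu1 haa.le
        have h2 : (r / 2) ^ a = (2:ℝ) ^ (-a) * r ^ a := by
          rw [Real.div_rpow hr.le (by norm_num), Real.rpow_neg (by norm_num)]
          ring
        have h3 : (2:ℝ) ^ (-a) ≤ K := le_max_right _ _
        have h4 : 0 ≤ r ^ a := Real.rpow_nonneg hr.le a
        nlinarith
    have hsu0 : 0 < s - u := by linarith
    have hf : 0 ≤ (s - u) ^ b - (t - u) ^ b := by
      have := Real.rpow_le_rpow_of_nonpos hsu0 (by linarith : s - u ≤ t - u) hb1.le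
      linarith
    calc u ^ a * (s - u) ^ b - u ^ a * (t - u) ^ b
        = u ^ a * ((s - u) ^ b - (t - u) ^ b) := by ring
      _ ≤ (K * r ^ a) * ((s - u) ^ b - (t - u) ^ b) := mul_le_mul_of_nonneg_right hua hf
  have hEs : (∫ u in (r/2)..r, (s - u) ^ b)
      = ((s - r/2) ^ (b + 1) - (s - r) ^ (b + 1)) / (b + 1) := by
    rw [intervalIntegral.integral_comp_sub_left (fun v : ℝ => v ^ b) s,
      integral_rpow (Or.inl hb0)]
  have hEt : (∫ u in (r/2)..r, (t - u) ^ b)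
      = ((t - r/2) ^ (b + 1) - (t - r) ^ (b + 1)) / (b + 1) := by
    rw [intervalIntegral.integral_comp_sub_left (fun v : ℝ => v ^ b) t,
      integral_rpow (Or.inl hb0)]
  have hval2 : (∫ u in (r/2)..r, (K * r ^ a) * ((s - u) ^ b - (t - u) ^ b))
      ≤ (K * r ^ a) * (δ ^ (1 + b) / (1 + b)) := by
    rw [intervalIntegral.integral_const_mul]
    apply mul_le_mul_of_nonneg_left _ (by positivity)
    rw [intervalIntegral.integral_sub hint_s hint_t, hEs, hEt]
    rw [div_sub_div_same]
    have hA1 : (t - r) ^ (b + 1) ≤ (s - r) ^ (b + 1) + δ ^ (b + 1) := by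
      have e : t - r = (s - r) + δ := by rw [hδ_def]; ring
      rw [e]
      exact subadd (by linarith) hδ.le (by linarith) (by linarith)
    have hA2 : (s - r/2) ^ (b + 1) ≤ (t - r/2) ^ (b + 1) :=
      Real.rpow_le_rpow (by linarith) (by linarith) (by linarith)
    have hnum : (s - r/2) ^ (b + 1) - (s - r) ^ (b + 1)
        - ((t - r/2) ^ (b + 1) - (t - r) ^ (b + 1)) ≤ δ ^ (b + 1) := by linarith
    have hcomm : δ ^ (1 + b) = δ ^ (b + 1) := by rw [add_comm]
    rw [hcomm, show (1:ℝ) + b = b + 1 from add_comm 1 b]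
    exact div_le_div_of_nonneg_right hnum (by linarith)
  rw [habs, hG]
  have hfinal : c * ((δ ^ (1 + b) * ((2:ℝ) ^ (-a) / (1 + a)) * r ^ a)
      + (K * r ^ a) * (δ ^ (1 + b) / (1 + b)))
      = c * ((2:ℝ) ^ (-a) / (1 + a) + K / (1 + b)) * δ ^ (1 + b) * r ^ a := by
    field_simp
  calc c * ((∫ u in (0:ℝ)..(r/2), (u ^ a * (s - u) ^ b - u ^ a * (t - u) ^ b))
        + ∫ u in (r/2)..r, (u ^ a * (s - u) ^ b - u ^ a * (t - u) ^ b))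
      ≤ c * ((δ ^ (1 + b) * ((2:ℝ) ^ (-a) / (1 + a)) * r ^ a)
        + (K * r ^ a) * (δ ^ (1 + b) / (1 + b))) := by
        apply mul_le_mul_of_nonneg_left _ hc.le
        have b1 := hbound1.trans_eq hval1
        have b2 := hbound2.trans hval2
        linarith
    _ = c * ((2:ℝ) ^ (-a) / (1 + a) + K / (1 + b)) * δ ^ (1 + b) * r ^ a := hfinal
end
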